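/- arXiv:math/0702331 — 5 statements merged into one kernel-verified Lean document; each statement's English description precedes it below -/
import Mathlib

section
/- For any continuous function x on [0,1] with x(0)=0, the continuity modulus Γ(δ)[x] := sup{|x(t)-x(s)| : s,t ∈ [0,1], |t-s| ≤ δ} and the excursion-restricted modulus Γ̃(δ)[x] := sup{|x(t)-x(s)| : s,t ∈ [0,1], |t-s| ≤ δ, and x(u) ≠ 0 for all u ∈ (s,t)} satisfy Γ̃(δ)[x] ≤ Γ(δ)[x] ≤ 2·Γ̃(δ)[x]. -/
open Set

/-- The continuity modulus at scale `δ` of `x : C([0,1], ℝ)`. -/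
noncomputable def contModulus (x : C(unitInterval, ℝ)) (δ : ℝ) : ℝ :=
  sSup {r : ℝ | ∃ s t : unitInterval, |(t : ℝ) - (s : ℝ)| ≤ δ ∧ r = |x t - x s|}

/-- `s ∼ₓ t` : `x` does not vanish strictly between `s` and `t`
(`s` and `t` belong to the same excursion of `x`). -/
def sameExcursion (x : C(unitInterval, ℝ)) (s t : unitInterval) : Prop :=
  ∀ u : unitInterval, min (s : ℝ) (t : ℝ) < (u : ℝ) → (u : ℝ) < max (s : ℝ) (t : ℝ) → x u ≠ 0

/-- The excursion-restricted continuity modulus at scale `δ`. -/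
noncomputable def excModulus (x : C(unitInterval, ℝ)) (δ : ℝ) : ℝ :=
  sSup {r : ℝ | ∃ s t : unitInterval,
    |(t : ℝ) - (s : ℝ)| ≤ δ ∧ sameExcursion x s t ∧ r = |x t - x s|}

/-- For `x : C([0,1],ℝ)` with `x 0 = 0` and `δ > 0`,
`Γ̃(δ) ≤ Γ(δ) ≤ 2 Γ̃(δ)`. -/
theorem excModulus_le_contModulus_le_two_mul (x : C(unitInterval, ℝ))
    (hx0 : x 0 = 0) (δ : ℝ) (hδ : 0 < δ) :
    excModulus x δ ≤ contModulus x δ ∧ contModulus x δ ≤ 2 * excModulus x δ := by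
  obtain ⟨M, hM⟩ : ∃ M, ∀ u : unitInterval, |x u| ≤ M := by
    obtain ⟨C, hC⟩ := (isCompact_univ (X := unitInterval)).exists_bound_of_continuousOn
      x.continuous.continuousOn
    exact ⟨C, fun u => by simpa using hC u (mem_univ u)⟩
  set G := {r : ℝ | ∃ s t : unitInterval, |(t : ℝ) - (s : ℝ)| ≤ δ ∧ r = |x t - x s|} with hG
  set E := {r : ℝ | ∃ s t : unitInterval,
      |(t : ℝ) - (s : ℝ)| ≤ δ ∧ sameExcursion x s t ∧ r = |x t - x s|} with hE
  have hbddG : BddAbove G := by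
    refine ⟨2 * M, ?_⟩
    rintro r ⟨s, t, -, rfl⟩
    calc |x t - x s| ≤ |x t| + |x s| := abs_sub _ _
      _ ≤ M + M := add_le_add (hM t) (hM s)
      _ = 2 * M := by ring
  have hbddE : BddAbove E := by
    refine ⟨2 * M, ?_⟩
    rintro r ⟨s, t, -, -, rfl⟩
    calc |x t - x s| ≤ |x t| + |x s| := abs_sub _ _
      _ ≤ M + M := add_le_add (hM t) (hM s)
      _ = 2 * M := by ring
  have h0E : (0 : ℝ) ∈ E := by
    refine ⟨0, 0, by simpa using hδ.le, ?_, by simp⟩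
    intro u h1 h2
    simp at h1 h2
    exact absurd h2 (not_lt.mpr u.2.1)
  have hneE : E.Nonempty := ⟨0, h0E⟩
  have hEnn : 0 ≤ excModulus x δ := le_csSup hbddE h0E
  constructor
  · refine csSup_le_csSup hbddG hneE ?_
    rintro r ⟨s, t, h, -, rfl⟩
    exact ⟨s, t, h, rfl⟩
  · have key : ∀ s t : unitInterval, (s : ℝ) ≤ t → |(t : ℝ) - (s : ℝ)| ≤ δ →
        |x t - x s| ≤ 2 * excModulus x δ := by
      intro s t hle hd
      by_cases hst : sameExcursion x s t
      · have h1 : |x t - x s| ≤ excModulus x δ := le_csSup hbddE ⟨s, t, hd, hst, rfl⟩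
        linarith
      · simp only [sameExcursion, not_forall] at hst
        obtain ⟨u0, hu1, hu2, hu0⟩ := hst
        rw [min_eq_left hle] at hu1
        rw [max_eq_right hle] at hu2
        push_neg at hu0
        have hts : (t : ℝ) - (s : ℝ) ≤ δ := (abs_le.mp hd).2
        set K : Set ℝ := Subtype.val ''
          {u : unitInterval | (s : ℝ) ≤ (u : ℝ) ∧ (u : ℝ) ≤ (t : ℝ) ∧ x u = 0} with hK
        have hKcl : IsClosed {u : unitInterval | (s : ℝ) ≤ (u : ℝ) ∧ (u : ℝ) ≤ (t : ℝ) ∧ x u = 0} := by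
          simp only [setOf_and]
          exact ((isClosed_le continuous_const continuous_subtype_val).inter
            ((isClosed_le continuous_subtype_val continuous_const).inter
              (isClosed_eq x.continuous continuous_const)))
        have hKc : IsCompact K := (hKcl.isCompact).image continuous_subtype_val
        have hKne : K.Nonempty := ⟨u0, ⟨u0, ⟨hu1.le, hu2.le, hu0⟩, rfl⟩⟩
        obtain ⟨a, haK, haLB⟩ := hKc.exists_isLeast hKne
        obtain ⟨c, hcK, hcUB⟩ := hKc.exists_isGreatest hKne
        obtain ⟨a', ⟨ha1, ha2, ha0⟩, rfl⟩ := haK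
        obtain ⟨c', ⟨hc1, hc2, hc0⟩, rfl⟩ := hcK
        have hsa : sameExcursion x s a' := by
          intro u h1 h2 hxu
          rw [min_eq_left ha1] at h1
          rw [max_eq_right ha1] at h2
          have : (a' : ℝ) ≤ (u : ℝ) := haLB ⟨u, ⟨h1.le, h2.le.trans ha2, hxu⟩, rfl⟩
          linarith
        have hct : sameExcursion x c' t := by
          intro u h1 h2 hxu
          rw [min_eq_left hc2] at h1
          rw [max_eq_right hc2] at h2
          have : (u : ℝ) ≤ (c' : ℝ) := hcUB ⟨u, ⟨hc1.trans h1.le, h2.le, hxu⟩, rfl⟩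
          linarith
        have hE1 : |x a' - x s| ≤ excModulus x δ := by
          refine le_csSup hbddE ⟨s, a', ?_, hsa, rfl⟩
          rw [abs_of_nonneg (by linarith)]
          linarith
        have hE2 : |x t - x c'| ≤ excModulus x δ := by
          refine le_csSup hbddE ⟨c', t, ?_, hct, rfl⟩
          rw [abs_of_nonneg (by linarith)]
          linarith
        have heq : x t - x s = (x t - x c') + (x a' - x s) := by
          rw [ha0, hc0]; ring
        calc |x t - x s| = |(x t - x c') + (x a' - x s)| := by rw [heq]
          _ ≤ |x t - x c'| + |x a' - x s| := abs_add_le _ _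
          _ ≤ 2 * excModulus x δ := by linarith
    refine csSup_le ⟨|x 0 - x 0|, 0, 0, by simpa using hδ.le, rfl⟩ ?_
    rintro r ⟨s, t, hd, rfl⟩
    rcases le_total (s : ℝ) (t : ℝ) with h | h
    · exact key s t h hd
    · rw [abs_sub_comm]
      exact key t s h (by rwa [abs_sub_comm])
end

section
/- Let (S_n) be the random walk with i.i.d. increments taking values +1, -1, 0 with P(ξ=+1)=P(ξ=-1)=p ∈ (0,1/2) and P(ξ=0)=1-2p, started at S_0=0. Let T := inf{n > 0 : S_n ≤ 0}. Then for every n ≥ 2, P(T = n) = p² [P(S_{n-2} = 0) - P(S_{n-2} = 2)]. -/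
open MeasureTheory ProbabilityTheory Finset
open scoped ENNReal

/-!
Let `N m x = P(S_m = x)` and `G m x = P(S_1 > 0, …, S_m > 0, S_m = x)`. By independence of the
steps both obey the one-step recursion `F (m+1) x = p F m (x-1) + p F m (x+1) + (1-2p) F m x`,
`G` only for `x > 0` and `G (m+1) x = 0` otherwise. As the walk cannot jump over `0` downwards,
`{T = m+2}` is a.s. the event that the walk stays positive up to time `m+1`, sits at `1` and then
steps down, so `P(T = m+2) = p G (m+1) 1`. The reflection principle, in analytic form, is
`G (m+1) x = p (N m (x-1) - N m (x+1))` for `x ≥ 0`: the right-hand side obeys the recursion of `G`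
for `x > 0` and vanishes at `x = 0` because `N m` is even. Take `x = 1`.
-/

def lazyStep (a b : ℝ≥0∞) (s : ℤ) : ℝ≥0∞ :=
  if s = 0 then b else if s = 1 ∨ s = -1 then a else 0

lemma tsum_lazyStep_mul (a b : ℝ≥0∞) (f : ℤ → ℝ≥0∞) (x : ℤ) :
    ∑' s, lazyStep a b s * f (x - s) = a * f (x - 1) + a * f (x + 1) + b * f x := by
  rw [tsum_eq_sum (s := {-1, 0, 1}) fun s hs => by
    simp only [Finset.mem_insert, Finset.mem_singleton, not_or] at hs
    simp [lazyStep, hs.1, hs.2.1, hs.2.2]]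
  simp [lazyStep, sub_eq_add_neg]
  ring

lemma lazyStep_neg (a b : ℝ≥0∞) (s : ℤ) : lazyStep a b (-s) = lazyStep a b s := by
  simp [lazyStep, neg_eq_iff_eq_neg, or_comm]

/-- Law at time `m` of the walk with step law `q`, killed as soon as it leaves `K` at a time
`1, …, m` (the start at `0` is not tested). -/
noncomputable def killedLaw (q : ℤ → ℝ≥0∞) (K : Set ℤ) : ℕ → ℤ → ℝ≥0∞
  | 0, x => if x = 0 then 1 else 0
  | m + 1, x => K.indicator (fun x => ∑' s, q s * killedLaw q K m (x - s)) x

lemma killedLaw_univ_neg {q : ℤ → ℝ≥0∞} (hq : ∀ s, q (-s) = q s) (m : ℕ) (x : ℤ) :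
    killedLaw q Set.univ m (-x) = killedLaw q Set.univ m x := by
  induction m generalizing x with
  | zero => simp [killedLaw]
  | succ m ih =>
    simp only [killedLaw, Set.indicator_univ]
    rw [← (Equiv.neg ℤ).tsum_eq]
    congr 1 with s
    rw [Equiv.neg_apply, hq, show -x - -s = -(x - s) by ring, ih]

lemma killedLaw_lazyStep_succ (a b : ℝ≥0∞) (K : Set ℤ) (m : ℕ) (x : ℤ) :
    killedLaw (lazyStep a b) K (m + 1) x = K.indicator (fun x =>
      a * killedLaw (lazyStep a b) K m (x - 1) + a * killedLaw (lazyStep a b) K m (x + 1) +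
        b * killedLaw (lazyStep a b) K m x) x := by
  simp only [killedLaw, tsum_lazyStep_mul]

lemma killedLaw_lazyStep_reflection (a b : ℝ≥0∞) (m : ℕ) {x : ℤ} (hx : 0 ≤ x) :
    killedLaw (lazyStep a b) (Set.Ioi 0) (m + 1) x + a * killedLaw (lazyStep a b) Set.univ m (x + 1)
      = a * killedLaw (lazyStep a b) Set.univ m (x - 1) := by
  set G := killedLaw (lazyStep a b) (Set.Ioi 0)
  set N := killedLaw (lazyStep a b) Set.univ
  have boundary (m : ℕ) : G (m + 1) 0 + a * N m (0 + 1) = a * N m (0 - 1) := by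
    simp [G, N, killedLaw_lazyStep_succ, killedLaw_univ_neg (lazyStep_neg a b) m 1]
  induction m generalizing x with
  | zero =>
    obtain rfl | hx := hx.eq_or_lt
    · exact boundary 0
    simp only [G, N, killedLaw_lazyStep_succ, Set.indicator_of_mem (Set.mem_Ioi.2 hx), killedLaw]
    obtain rfl | hx1 := (show 1 ≤ x by omega).eq_or_lt
    · simp
    · simp [sub_eq_zero, hx1.ne', hx.ne']
      omega
  | succ m ih =>
    obtain rfl | hx := hx.eq_or_lt
    · exact boundary (m + 1)
    calc G (m + 1 + 1) x + a * N (m + 1) (x + 1)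
        = a * (G (m + 1) (x - 1) + a * N m (x - 1 + 1))
          + a * (G (m + 1) (x + 1) + a * N m (x + 1 + 1))
          + b * (G (m + 1) x + a * N m (x + 1)) := by
          simp only [G, N, killedLaw_lazyStep_succ, Set.indicator_of_mem (Set.mem_Ioi.2 hx),
            Set.indicator_univ, add_sub_cancel_right, sub_add_cancel]
          ring
      _ = a * N (m + 1) (x - 1) := by
          rw [ih (by omega), ih (by omega), ih hx.le]
          simp only [N, killedLaw_lazyStep_succ, Set.indicator_univ, add_sub_cancel_right,
            sub_add_cancel]
          ring

section
variable {Ω : Type*} {ξ : ℕ → Ω → ℤ}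

abbrev sigmaBefore (ξ : ℕ → Ω → ℤ) (m : ℕ) : MeasurableSpace Ω :=
  ⨆ i ∈ Set.Iio m, MeasurableSpace.comap (ξ i) inferInstance

def killedEvent (ξ : ℕ → Ω → ℤ) (K : Set ℤ) (m : ℕ) (x : ℤ) : Set Ω :=
  {ω | (∀ k, 0 < k → k ≤ m → ∑ i ∈ range k, ξ i ω ∈ K) ∧ ∑ i ∈ range m, ξ i ω = x}

lemma measurable_sum_sigmaBefore {k m : ℕ} (hk : k ≤ m) :
    Measurable[sigmaBefore ξ m] fun ω => ∑ i ∈ range k, ξ i ω :=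
  Finset.measurable_sum _ fun i hi => (comap_measurable (ξ i)).mono
    (le_iSup₂ (f := fun i (_ : i ∈ Set.Iio m) => MeasurableSpace.comap (ξ i) inferInstance) i
      (by simp at hi ⊢; omega)) le_rfl

lemma measurableSet_killedEvent (K : Set ℤ) (m : ℕ) (x : ℤ) :
    MeasurableSet[sigmaBefore ξ m] (killedEvent ξ K m x) := by
  let _ := sigmaBefore ξ m
  refine Measurable.setOf ((Measurable.forall fun k => ?_).and
    ((measurable_sum_sigmaBefore le_rfl).eq_const x))
  by_cases hk : k ≤ m
  · exact measurable_const.imp (measurable_const.imp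
      ((measurable_sum_sigmaBefore hk) (MeasurableSet.of_discrete (s := K))).mem)
  · simp only [hk, false_imp_iff, imp_true_iff]
    exact measurable_const

lemma killedEvent_succ_of_mem {K : Set ℤ} {x : ℤ} (hx : x ∈ K) (m : ℕ) :
    killedEvent ξ K (m + 1) x = ⋃ s, killedEvent ξ K m (x - s) ∩ {ω | ξ m ω = s} := by
  ext ω
  simp only [killedEvent, Set.mem_iUnion, Set.mem_inter_iff, Set.mem_ofPred_eq, sum_range_succ]
  constructor
  · rintro ⟨hK, hsum⟩
    exact ⟨ξ m ω, ⟨fun k hk hkm => hK k hk (by omega), by omega⟩, rfl⟩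
  · rintro ⟨s, ⟨hK, hsum⟩, rfl⟩
    refine ⟨fun k hk hkm => ?_, by omega⟩
    obtain hkm | rfl := hkm.lt_or_eq
    · exact hK k hk (by omega)
    · rwa [sum_range_succ, hsum, sub_add_cancel]

lemma killedEvent_succ_of_notMem {K : Set ℤ} {x : ℤ} (hx : x ∉ K) (m : ℕ) :
    killedEvent ξ K (m + 1) x = ∅ :=
  Set.eq_empty_of_forall_notMem fun _ ⟨hK, hsum⟩ => hx (hsum ▸ hK (m + 1) m.succ_pos le_rfl)
end

section
variable {Ω : Type*} [MeasurableSpace Ω] {μ : Measure Ω} {ξ : ℕ → Ω → ℤ}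

lemma measure_eq_lazyStep [IsProbabilityMeasure μ] {X : Ω → ℤ} (hX : Measurable X) {a b : ℝ≥0∞}
    (hup : μ {ω | X ω = 1} = a) (hdown : μ {ω | X ω = -1} = a) (hlazy : μ {ω | X ω = 0} = b)
    (htotal : a + a + b = 1) (s : ℤ) : μ {ω | X ω = s} = lazyStep a b s := by
  unfold lazyStep
  split_ifs with h0 h1
  · rwa [h0]
  · rcases h1 with rfl | rfl <;> assumption
  · push Not at h1
    have hsum := sum_measure_preimage_singleton (μ := μ) {s, 1, -1, 0}
      (fun y _ => hX (measurableSet_singleton y))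
    rw [sum_insert (by simp [h0, h1.1, h1.2]), sum_insert (by simp), sum_insert (by simp),
      sum_singleton] at hsum
    change μ {ω | X ω = s} + (μ {ω | X ω = 1} + (μ {ω | X ω = -1} + μ {ω | X ω = 0})) = _ at hsum
    rw [hup, hdown, hlazy, ← add_assoc a, htotal] at hsum
    have hle : μ {ω | X ω = s} + 1 ≤ 0 + 1 := (hsum.trans_le prob_le_one).trans (zero_add 1).ge
    exact nonpos_iff_eq_zero.1 ((ENNReal.add_le_add_iff_right ENNReal.one_ne_top).1 hle)

lemma sigmaBefore_le (hmeas : ∀ i, Measurable (ξ i)) (m : ℕ) : sigmaBefore ξ m ≤ ‹_› :=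
  iSup₂_le fun i _ => (hmeas i).comap_le

lemma measure_inter_eq_mul_of_sigmaBefore (hmeas : ∀ i, Measurable (ξ i)) (hindep : iIndepFun ξ μ)
    {m : ℕ} {E : Set Ω} (hE : MeasurableSet[sigmaBefore ξ m] E) (s : ℤ) :
    μ (E ∩ {ω | ξ m ω = s}) = μ E * μ {ω | ξ m ω = s} := by
  have hindep' := indep_iSup_of_disjoint (fun i => (hmeas i).comap_le)
    ((iIndepFun_iff_iIndep _ _ _).1 hindep) (S := Set.Iio m) (T := {m}) (by simp)
  exact (Indep_iff _ _ _).1 hindep' E _ hE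
    (le_iSup₂ (f := fun i (_ : i ∈ ({m} : Set ℕ)) => MeasurableSpace.comap (ξ i) inferInstance) m
      rfl _ ⟨{s}, measurableSet_singleton s, rfl⟩)

lemma measure_killedEvent [IsProbabilityMeasure μ] (hmeas : ∀ i, Measurable (ξ i))
    (hindep : iIndepFun ξ μ) {q : ℤ → ℝ≥0∞} (hlaw : ∀ i s, μ {ω | ξ i ω = s} = q s)
    (K : Set ℤ) (m : ℕ) (x : ℤ) : μ (killedEvent ξ K m x) = killedLaw q K m x := by
  induction m generalizing x with
  | zero =>
    have hvacuous (ω : Ω) : ∀ k, 0 < k → k ≤ 0 → ∑ i ∈ range k, ξ i ω ∈ K :=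
      fun _ hk hk0 => absurd hk0 hk.not_ge
    have hzero : killedEvent ξ K 0 x = {_ω | 0 = x} := by
      ext ω
      simp only [killedEvent, Set.mem_ofPred_eq, range_zero, sum_empty]
      exact and_iff_right (hvacuous ω)
    rw [hzero]
    by_cases hx : x = 0 <;> simp [killedLaw, hx, eq_comm]
  | succ m ih =>
    by_cases hx : x ∈ K
    · rw [killedEvent_succ_of_mem hx, measure_iUnion ?disjoint ?measurable, killedLaw,
        Set.indicator_of_mem hx]
      · congr 1 with s
        rw [measure_inter_eq_mul_of_sigmaBefore hmeas hindep (measurableSet_killedEvent K m _),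
          ih, hlaw, mul_comm]
      case disjoint =>
        exact fun s t hst => Set.disjoint_left.2 fun ω hs ht => hst (hs.2.symm.trans ht.2)
      case measurable =>
        exact fun s => (sigmaBefore_le hmeas m _ (measurableSet_killedEvent K m _)).inter
          (hmeas m (measurableSet_singleton s))
    · rw [killedEvent_succ_of_notMem hx, killedLaw, Set.indicator_of_notMem hx, measure_empty]

lemma ae_neg_one_le_of_lazyStep {X : Ω → ℤ} {a b : ℝ≥0∞}
    (hlaw : ∀ s, μ {ω | X ω = s} = lazyStep a b s) : ∀ᵐ ω ∂μ, -1 ≤ X ω := by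
  have hset : {ω | ¬ -1 ≤ X ω} = ⋃ s ∈ Set.Iio (-1 : ℤ), {ω | X ω = s} := by ext; simp
  rw [ae_iff, hset, measure_biUnion_null_iff (Set.to_countable _)]
  intro s hs
  simp only [Set.mem_Iio] at hs
  rw [hlaw, lazyStep, if_neg (by omega), if_neg (by omega)]

lemma firstEntrance_ae_eq {n : ℕ} (hn : 0 < n) (hstep : ∀ᵐ ω ∂μ, -1 ≤ ξ n ω) :
    {ω | (∀ k, 0 < k → k < n + 1 → 0 < ∑ i ∈ range k, ξ i ω) ∧ ∑ i ∈ range (n + 1), ξ i ω ≤ 0}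
      =ᵐ[μ] (killedEvent ξ (Set.Ioi 0) n 1 ∩ {ω | ξ n ω = -1} : Set Ω) := by
  refine Filter.eventuallyEq_set.2 ?_
  filter_upwards [hstep] with ω hω
  simp only [killedEvent, Set.mem_inter_iff, Set.mem_ofPred_eq, Set.mem_Ioi, sum_range_succ _ n]
  constructor
  · rintro ⟨hpos, hle⟩
    have := hpos n hn (by omega)
    exact ⟨⟨fun k hk hkn => hpos k hk (by omega), by omega⟩, by omega⟩
  · rintro ⟨⟨hpos, hsum⟩, hs⟩
    exact ⟨fun k hk hkn => hpos k hk (by omega), by omega⟩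

lemma measure_sum_eq_killedLaw_univ [IsProbabilityMeasure μ] (hmeas : ∀ i, Measurable (ξ i))
    (hindep : iIndepFun ξ μ) {q : ℤ → ℝ≥0∞} (hlaw : ∀ i s, μ {ω | ξ i ω = s} = q s)
    (m : ℕ) (x : ℤ) : μ {ω | ∑ i ∈ range m, ξ i ω = x} = killedLaw q Set.univ m x := by
  rw [← measure_killedEvent hmeas hindep hlaw]
  simp [killedEvent]

lemma measure_firstEntrance [IsProbabilityMeasure μ] (hmeas : ∀ i, Measurable (ξ i))
    (hindep : iIndepFun ξ μ) {a b : ℝ≥0∞} (hlaw : ∀ i s, μ {ω | ξ i ω = s} = lazyStep a b s)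
    {n : ℕ} (hn : 0 < n) :
    μ {ω | (∀ k, 0 < k → k < n + 1 → 0 < ∑ i ∈ range k, ξ i ω) ∧ ∑ i ∈ range (n + 1), ξ i ω ≤ 0}
      = killedLaw (lazyStep a b) (Set.Ioi 0) n 1 * a := by
  rw [measure_congr (firstEntrance_ae_eq hn (ae_neg_one_le_of_lazyStep (hlaw n))),
    measure_inter_eq_mul_of_sigmaBefore hmeas hindep (measurableSet_killedEvent _ _ _),
    measure_killedEvent hmeas hindep hlaw, hlaw]
  simp [lazyStep]

lemma measure_firstEntrance_add_eq [IsProbabilityMeasure μ] (hmeas : ∀ i, Measurable (ξ i))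
    (hindep : iIndepFun ξ μ) {a b : ℝ≥0∞} (hlaw : ∀ i s, μ {ω | ξ i ω = s} = lazyStep a b s)
    (m : ℕ) :
    μ {ω | (∀ k, 0 < k → k < m + 2 → 0 < ∑ i ∈ range k, ξ i ω) ∧ ∑ i ∈ range (m + 2), ξ i ω ≤ 0}
        + a * (a * μ {ω | ∑ i ∈ range m, ξ i ω = 2})
      = a * (a * μ {ω | ∑ i ∈ range m, ξ i ω = 0}) := by
  have hreflection := killedLaw_lazyStep_reflection a b m (zero_le_one' ℤ)
  norm_num at hreflection
  rw [measure_firstEntrance hmeas hindep hlaw m.succ_pos, measure_sum_eq_killedLaw_univ hmeas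
    hindep hlaw, measure_sum_eq_killedLaw_univ hmeas hindep hlaw, ← hreflection]
  ring
end

/-- Reflection-principle identity for the first entrance time `T` of `(-∞,0]`
of the lazy symmetric random walk with `P(ξ = ±1) = p`, `P(ξ = 0) = 1 - 2p`:
for `n ≥ 2`, `P(T = n) = p² [P(S_{n-2} = 0) - P(S_{n-2} = 2)]`.
The event `{T = n}` is written explicitly as
`{S_1 > 0, …, S_{n-1} > 0, S_n ≤ 0}`. -/
theorem first_passage_reflection (Ω : Type*) [MeasurableSpace Ω]
    (μ : Measure Ω) [IsProbabilityMeasure μ]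
    (p : ℝ) (hp : p ∈ Set.Ioo (0 : ℝ) (1 / 2))
    (ξ : ℕ → Ω → ℤ) (hmeas : ∀ i, Measurable (ξ i))
    (hindep : iIndepFun ξ μ)
    (hup : ∀ i, μ {ω | ξ i ω = 1} = ENNReal.ofReal p)
    (hdown : ∀ i, μ {ω | ξ i ω = -1} = ENNReal.ofReal p)
    (hlazy : ∀ i, μ {ω | ξ i ω = 0} = ENNReal.ofReal (1 - 2 * p))
    (S : ℕ → Ω → ℤ) (hS : ∀ n ω, S n ω = ∑ i ∈ Finset.range n, ξ i ω)
    (n : ℕ) (hn : 2 ≤ n) :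
    (μ {ω | (∀ k, 0 < k → k < n → 0 < S k ω) ∧ S n ω ≤ 0}).toReal =
      p ^ 2 * ((μ {ω | S (n - 2) ω = 0}).toReal -
        (μ {ω | S (n - 2) ω = 2}).toReal) := by
  obtain ⟨m, rfl⟩ : ∃ m, n = m + 2 := ⟨n - 2, by omega⟩
  have htotal : ENNReal.ofReal p + ENNReal.ofReal p + ENNReal.ofReal (1 - 2 * p) = 1 := by
    rw [← ENNReal.ofReal_add hp.1.le hp.1.le, ← ENNReal.ofReal_add (by linarith [hp.1])
      (by linarith [hp.2]), show p + p + (1 - 2 * p) = 1 by ring, ENNReal.ofReal_one]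
  have key := measure_firstEntrance_add_eq hmeas hindep
    (fun i => measure_eq_lazyStep (hmeas i) (hup i) (hdown i) (hlazy i) htotal) m
  replace key := congrArg ENNReal.toReal key
  rw [ENNReal.toReal_add (measure_ne_top μ _) (by finiteness)] at key
  simp only [ENNReal.toReal_mul, ENNReal.toReal_ofReal hp.1.le] at key
  simp only [hS, Nat.add_sub_cancel]
  linear_combination key
end

section
/- Let (S_n) be the lazy symmetric random walk with P(ξ=±1)=p ∈ (0,1/2), P(ξ=0)=1-2p, S_0=0, and T := inf{n>0 : S_n ≤ 0}. Then for every m ≥ 1 and every integer b ≥ 1, P(S_m = b, T > m) = p [P(S_{m-1} = b-1) - P(S_{m-1} = b+1)]. -/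
open MeasureTheory ProbabilityTheory Finset

/-
Write a(m, b) = P(S_m = b, T > m) and u(n, c) = P(S_n = c). Since the step ξ_m is independent
of ξ_0, …, ξ_{m-1}, both u and a (for b ≥ 1) satisfy the forward equation
f(m+1, b) = p f(m, b+1) + (1-2p) f(m, b) + p f(m, b-1), and a(m, 0) = 0 for m ≥ 1.
The right-hand side p (u(m-1, b-1) - u(m-1, b+1)) is a combination of shifts of u, so it
satisfies the same equation, and it vanishes at b = 0 because the walk is symmetric:
u(n, -c) = u(n, c). Induction on m from m = 1 (where both sides are p·[b = 1]) finishes.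
-/

namespace LazyWalk

variable {Ω : Type*} {ξ : ℕ → Ω → ℤ}

def walk (ξ : ℕ → Ω → ℤ) (n : ℕ) (ω : Ω) : ℤ := ∑ i ∈ range n, ξ i ω

@[simp] lemma walk_zero (ω : Ω) : walk ξ 0 ω = 0 := rfl

lemma walk_succ (n : ℕ) (ω : Ω) : walk ξ (n + 1) ω = walk ξ n ω + ξ n ω :=
  sum_range_succ _ _

abbrev firstSteps (ξ : ℕ → Ω → ℤ) (n : ℕ) : MeasurableSpace Ω :=
  ⨆ i ∈ range n, MeasurableSpace.comap (ξ i) inferInstance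

lemma measurable_walk {k n : ℕ} (hk : k ≤ n) : Measurable[firstSteps ξ n] (walk ξ k) :=
  Finset.measurable_sum _ fun i hi => Measurable.of_comap_le <|
    le_iSup₂ (f := fun i (_ : i ∈ range n) => MeasurableSpace.comap (ξ i) inferInstance) i
      (mem_range.2 ((mem_range.1 hi).trans_le hk))

/-- The event `{T > n}`. -/
def staysPositive (ξ : ℕ → Ω → ℤ) (n : ℕ) : Set Ω := {ω | ∀ k, 0 < k → k ≤ n → 0 < walk ξ k ω}

lemma measurableSet_staysPositive (n : ℕ) :
    MeasurableSet[firstSteps ξ n] (staysPositive ξ n) := by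
  simp only [staysPositive, Set.ofPred_forall]
  exact .iInter fun k => .iInter fun _ => .iInter fun hk =>
    measurable_walk hk (Set.to_countable _).measurableSet

@[simp] lemma staysPositive_zero : staysPositive ξ 0 = Set.univ :=
  Set.eq_univ_of_forall fun _ _ hk hk0 => absurd hk (by omega)

lemma staysPositive_succ_inter {n : ℕ} {b : ℤ} (hb : 0 < b) :
    staysPositive ξ (n + 1) ∩ {ω | walk ξ (n + 1) ω = b} =
      staysPositive ξ n ∩ {ω | walk ξ (n + 1) ω = b} := by
  ext ω
  simp only [staysPositive, Set.mem_inter_iff, Set.mem_ofPred_eq]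
  refine ⟨fun ⟨h, hω⟩ => ⟨fun k hk hkn => h k hk (by omega), hω⟩, fun ⟨h, hω⟩ => ⟨?_, hω⟩⟩
  intro k hk hkn
  rcases hkn.lt_or_eq with hkn | rfl
  exacts [h k hk (by omega), hω ▸ hb]

lemma staysPositive_inter_walk_zero {n : ℕ} (hn : 0 < n) :
    staysPositive ξ n ∩ {ω | walk ξ n ω = 0} = ∅ :=
  Set.eq_empty_of_forall_notMem fun _ ⟨h, hω⟩ => (h n hn le_rfl).ne' hω

variable [MeasurableSpace Ω] {μ : Measure Ω}

lemma firstSteps_le (hmeas : ∀ i, Measurable (ξ i)) (n : ℕ) :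
    firstSteps ξ n ≤ ‹MeasurableSpace Ω› :=
  iSup₂_le fun i _ => (hmeas i).comap_le

lemma indep_firstSteps_step (hmeas : ∀ i, Measurable (ξ i)) (hindep : iIndepFun ξ μ) (n : ℕ) :
    Indep (firstSteps ξ n) (MeasurableSpace.comap (ξ n) inferInstance) μ := by
  have := indep_iSup_of_disjoint (fun i => (hmeas i).comap_le)
    ((iIndepFun_iff_iIndep _ _ _).1 hindep) (S := (range n : Set ℕ)) (T := {n}) (by simp)
  simpa [firstSteps] using this

lemma measureReal_inter_step (hmeas : ∀ i, Measurable (ξ i)) (hindep : iIndepFun ξ μ)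
    {n : ℕ} {A : Set Ω} (hA : MeasurableSet[firstSteps ξ n] A) (v : ℤ) :
    μ.real (A ∩ ξ n ⁻¹' {v}) = μ.real A * μ.real (ξ n ⁻¹' {v}) := by
  simp only [measureReal_def, ← ENNReal.toReal_mul]
  rw [(Indep_iff _ _ μ).1 (indep_firstSteps_step hmeas hindep n) _ _ hA ⟨{v}, trivial, rfl⟩]

lemma measureReal_inter_walk_succ_eq_sum [IsFiniteMeasure μ] (hmeas : ∀ i, Measurable (ξ i))
    (hindep : iIndepFun ξ μ) {n : ℕ} {s : Finset ℤ} (hs : ∀ᵐ ω ∂μ, ξ n ω ∈ s) {A : Set Ω}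
    (hA : MeasurableSet[firstSteps ξ n] A) (c : ℤ) :
    μ.real (A ∩ {ω | walk ξ (n + 1) ω = c}) =
      ∑ v ∈ s, μ.real (A ∩ {ω | walk ξ n ω = c - v}) * μ.real (ξ n ⁻¹' {v}) := by
  have hpast : ∀ v : ℤ, MeasurableSet[firstSteps ξ n] (A ∩ {ω | walk ξ n ω = c - v}) :=
    fun v => hA.inter (measurable_walk le_rfl (measurableSet_singleton _))
  have hsplit : (A ∩ {ω | walk ξ (n + 1) ω = c} : Set Ω)
      =ᵐ[μ] (⋃ v ∈ s, A ∩ {ω | walk ξ n ω = c - v} ∩ ξ n ⁻¹' {v} : Set Ω) := by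
    refine Filter.eventuallyEq_set.2 ?_
    filter_upwards [hs] with ω hω
    simp [walk_succ, hω, eq_sub_iff_add_eq]
  rw [measureReal_congr hsplit, measureReal_biUnion_finset]
  · exact sum_congr rfl fun v _ => measureReal_inter_step hmeas hindep (hpast v) v
  · intro v _ w _ hvw
    exact Disjoint.mono Set.inter_subset_right Set.inter_subset_right
      ((Set.disjoint_singleton.2 hvw).preimage (ξ n))
  · exact fun v _ =>
      (firstSteps_le hmeas n _ (hpast v)).inter (hmeas n (measurableSet_singleton v))

def HasLazyLaw (μ : Measure Ω) (X : Ω → ℤ) (p : ℝ) : Prop :=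
  μ {ω | X ω = 1} = ENNReal.ofReal p ∧ μ {ω | X ω = -1} = ENNReal.ofReal p ∧
    μ {ω | X ω = 0} = ENNReal.ofReal (1 - 2 * p)

variable {p : ℝ}

lemma HasLazyLaw.ae_mem [IsProbabilityMeasure μ] {X : Ω → ℤ} (hX : Measurable X)
    (h : HasLazyLaw μ X p) (hp₀ : 0 ≤ p) (hp₁ : p ≤ 1 / 2) :
    ∀ᵐ ω ∂μ, X ω ∈ ({-1, 0, 1} : Finset ℤ) := by
  obtain ⟨hup, hdown, hlazy⟩ := h
  change ∀ᵐ ω ∂μ, ω ∈ X ⁻¹' ↑({-1, 0, 1} : Finset ℤ)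
  rw [ae_mem_iff_measure_eq (hX (by simp : MeasurableSet _)).nullMeasurableSet, measure_univ,
    ← sum_measure_preimage_singleton _ fun v _ => hX (measurableSet_singleton v)]
  simp only [Set.preimage, Set.mem_singleton_iff]
  rw [sum_insert (by decide), sum_insert (by decide), sum_singleton, hdown, hlazy, hup,
    ← ENNReal.ofReal_add (by linarith) hp₀, ← ENNReal.ofReal_add hp₀ (by linarith)]
  convert ENNReal.ofReal_one
  ring

lemma HasLazyLaw.measureReal_preimage {X : Ω → ℤ} (h : HasLazyLaw μ X p) (hp₀ : 0 ≤ p)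
    (hp₁ : p ≤ 1 / 2) :
    μ.real (X ⁻¹' {-1}) = p ∧ μ.real (X ⁻¹' {0}) = 1 - 2 * p ∧ μ.real (X ⁻¹' {1}) = p := by
  obtain ⟨hup, hdown, hlazy⟩ := h
  refine ⟨?_, ?_, ?_⟩ <;> rw [measureReal_def]
  · exact (congrArg ENNReal.toReal hdown).trans (ENNReal.toReal_ofReal hp₀)
  · exact (congrArg ENNReal.toReal hlazy).trans (ENNReal.toReal_ofReal (by linarith))
  · exact (congrArg ENNReal.toReal hup).trans (ENNReal.toReal_ofReal hp₀)

lemma measureReal_inter_walk_succ [IsProbabilityMeasure μ] (hmeas : ∀ i, Measurable (ξ i))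
    (hindep : iIndepFun ξ μ) {n : ℕ} (hlaw : HasLazyLaw μ (ξ n) p) (hp₀ : 0 ≤ p)
    (hp₁ : p ≤ 1 / 2) {A : Set Ω} (hA : MeasurableSet[firstSteps ξ n] A) (c : ℤ) :
    μ.real (A ∩ {ω | walk ξ (n + 1) ω = c}) =
      p * μ.real (A ∩ {ω | walk ξ n ω = c + 1})
        + (1 - 2 * p) * μ.real (A ∩ {ω | walk ξ n ω = c})
        + p * μ.real (A ∩ {ω | walk ξ n ω = c - 1}) := by
  obtain ⟨hdown, hlazy, hup⟩ := hlaw.measureReal_preimage hp₀ hp₁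
  rw [measureReal_inter_walk_succ_eq_sum hmeas hindep (hlaw.ae_mem (hmeas n) hp₀ hp₁) hA c,
    sum_insert (by decide), sum_insert (by decide), sum_singleton, hdown, hlazy, hup]
  simp only [sub_neg_eq_add, sub_zero]
  ring

lemma measureReal_walk_succ [IsProbabilityMeasure μ] (hmeas : ∀ i, Measurable (ξ i))
    (hindep : iIndepFun ξ μ) {n : ℕ} (hlaw : HasLazyLaw μ (ξ n) p) (hp₀ : 0 ≤ p)
    (hp₁ : p ≤ 1 / 2) (c : ℤ) :
    μ.real {ω | walk ξ (n + 1) ω = c} =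
      p * μ.real {ω | walk ξ n ω = c + 1} + (1 - 2 * p) * μ.real {ω | walk ξ n ω = c}
        + p * μ.real {ω | walk ξ n ω = c - 1} := by
  simpa only [Set.univ_inter] using
    measureReal_inter_walk_succ hmeas hindep hlaw hp₀ hp₁ MeasurableSet.univ c

lemma measureReal_walk_neg [IsProbabilityMeasure μ] (hmeas : ∀ i, Measurable (ξ i))
    (hindep : iIndepFun ξ μ) (hlaw : ∀ i, HasLazyLaw μ (ξ i) p) (hp₀ : 0 ≤ p)
    (hp₁ : p ≤ 1 / 2) (n : ℕ) (c : ℤ) :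
    μ.real {ω | walk ξ n ω = -c} = μ.real {ω | walk ξ n ω = c} := by
  induction n generalizing c with
  | zero => simp [neg_eq_zero, eq_comm]
  | succ n ih =>
    rw [measureReal_walk_succ hmeas hindep (hlaw n) hp₀ hp₁,
      measureReal_walk_succ hmeas hindep (hlaw n) hp₀ hp₁, show -c + 1 = -(c - 1) by ring,
      show -c - 1 = -(c + 1) by ring, ih, ih, ih]
    ring

lemma measureReal_staysPositive_inter_walk [IsProbabilityMeasure μ]
    (hmeas : ∀ i, Measurable (ξ i)) (hindep : iIndepFun ξ μ) (hlaw : ∀ i, HasLazyLaw μ (ξ i) p)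
    (hp₀ : 0 ≤ p) (hp₁ : p ≤ 1 / 2) (n : ℕ) {b : ℤ} (hb : 0 ≤ b) :
    μ.real (staysPositive ξ (n + 1) ∩ {ω | walk ξ (n + 1) ω = b}) =
      p * (μ.real {ω | walk ξ n ω = b - 1} - μ.real {ω | walk ξ n ω = b + 1}) := by
  have step := fun n => measureReal_inter_walk_succ hmeas hindep (hlaw n) hp₀ hp₁
    (measurableSet_staysPositive n)
  have hzero (n : ℕ) : μ.real (staysPositive ξ (n + 1) ∩ {ω | walk ξ (n + 1) ω = 0}) =
      p * (μ.real {ω | walk ξ n ω = 0 - 1} - μ.real {ω | walk ξ n ω = 0 + 1}) := by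
    rw [staysPositive_inter_walk_zero n.succ_pos, measureReal_empty, zero_sub,
      measureReal_walk_neg hmeas hindep hlaw hp₀ hp₁, zero_add, sub_self, mul_zero]
  induction n generalizing b with
  | zero =>
    rcases hb.eq_or_lt with rfl | hb
    · exact hzero 0
    rw [staysPositive_succ_inter hb, step]
    simp [hb.ne, (by omega : (0 : ℤ) < b + 1).ne]
  | succ n ih =>
    rcases hb.eq_or_lt with rfl | hb
    · exact hzero (n + 1)
    rw [staysPositive_succ_inter hb, step, ih (by omega), ih hb.le, ih (by omega),
      measureReal_walk_succ hmeas hindep (hlaw n) hp₀ hp₁ (b - 1),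
      measureReal_walk_succ hmeas hindep (hlaw n) hp₀ hp₁ (b + 1)]
    simp only [sub_add_cancel, add_sub_cancel_right]
    ring

end LazyWalk

/-- Reflection-principle identity: for the lazy symmetric random walk with
`P(ξ = ±1) = p`, `P(ξ = 0) = 1 - 2p`, first entrance time `T` of `(-∞,0]`,
every `m ≥ 1` and integer `b ≥ 1`:
`P(S_m = b, T > m) = p [P(S_{m-1} = b-1) - P(S_{m-1} = b+1)]`.
The event `{T > m}` is written explicitly as `{S_1 > 0, …, S_m > 0}`. -/
theorem reflection_identity (Ω : Type*) [MeasurableSpace Ω]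
(μ : Measure Ω) [IsProbabilityMeasure μ]
    (p : ℝ) (hp : p ∈ Set.Ioo (0 : ℝ) (1 / 2))
    (ξ : ℕ → Ω → ℤ) (hmeas : ∀ i, Measurable (ξ i))
    (hindep : iIndepFun ξ μ)
    (hup : ∀ i, μ {ω | ξ i ω = 1} = ENNReal.ofReal p)
    (hdown : ∀ i, μ {ω | ξ i ω = -1} = ENNReal.ofReal p)
    (hlazy : ∀ i, μ {ω | ξ i ω = 0} = ENNReal.ofReal (1 - 2 * p))
    (S : ℕ → Ω → ℤ) (hS : ∀ n ω, S n ω = ∑ i ∈ Finset.range n, ξ i ω)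
    (m : ℕ) (hm : 1 ≤ m) (b : ℤ) (hb : 1 ≤ b) :
    (μ {ω | S m ω = b ∧ ∀ k, 0 < k → k ≤ m → 0 < S k ω}).toReal =
      p * ((μ {ω | S (m - 1) ω = b - 1}).toReal -
        (μ {ω | S (m - 1) ω = b + 1}).toReal) := by
  obtain rfl : S = LazyWalk.walk ξ := funext fun n => funext (hS n)
  obtain ⟨n, rfl⟩ : ∃ n, m = n + 1 := ⟨m - 1, by omega⟩
  have key := LazyWalk.measureReal_staysPositive_inter_walk hmeas hindep
    (fun i => ⟨hup i, hdown i, hlazy i⟩) hp.1.le hp.2.le n (b := b) (by omega)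
  rw [Set.inter_comm] at key
  exact key
end

section
/- Let (Q_N^f) be a tight sequence of probability measures on C([0,1]) with Q_N^f concentrated on paths starting at 0. Define g_γ(δ) := inf_{N ∈ ℕ, 1 ≤ t ≤ N} Q_t^f( Γ((N/t)δ) ≤ γ √(N/t) ), where Γ(δ')[x] is the modulus of continuity at scale min(δ',1). Then for every γ > 0, lim inf_{δ→0} g_γ(δ) = 1. -/
open MeasureTheory Filter Set

/-- The continuity modulus of `x : C([0,1], ℝ)` at scale `min δ' 1`. -/
noncomputable def capModulus (x : C(unitInterval, ℝ)) (δ' : ℝ) : ℝ :=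
  sSup {r : ℝ | ∃ u v : unitInterval, |(u : ℝ) - (v : ℝ)| ≤ min δ' 1 ∧ r = |x u - x v|}

variable [MeasurableSpace C(unitInterval, ℝ)] [BorelSpace C(unitInterval, ℝ)]

/-- A sequence of Borel measures on `C([0,1])` is tight. -/
def IsTightSeq (Q : ℕ → Measure C(unitInterval, ℝ)) : Prop :=
  ∀ ε : ℝ, 0 < ε → ∃ K : Set C(unitInterval, ℝ), IsCompact K ∧
    ∀ N, Q N Kᶜ ≤ ENNReal.ofReal ε

/-! Tightness puts mass at least `1 - ε` of every `Q_t` on one compact set `K`, so it suffices to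
bound `Γ(rδ) ≤ γ √r` on `K` uniformly in `r = N/t ≥ 1` once `δ` is small. Put
`B := (2 sup_K ‖x‖ / γ)²`. For `r ≤ B` the scale `rδ ≤ (B + 1) δ` is small and `K` is uniformly
equicontinuous (evaluation is uniformly continuous on the compact set `K × [0,1]`), so
`Γ(rδ) ≤ γ`; for `r ≥ B` the crude bound `Γ ≤ 2 sup_K ‖x‖ ≤ γ √r` suffices. -/

lemma IsCompact.exists_forall_dist_apply_le {X Y : Type*} [PseudoMetricSpace X] [CompactSpace X]
    [PseudoMetricSpace Y] {K : Set C(X, Y)} (hK : IsCompact K) {η : ℝ} (hη : 0 < η) :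
    ∃ δ > 0, ∀ x ∈ K, ∀ u v : X, dist u v ≤ δ → dist (x u) (x v) ≤ η := by
  have huc : UniformContinuousOn (fun p : C(X, Y) × X => p.1 p.2) (K ×ˢ univ) :=
    (hK.prod isCompact_univ).uniformContinuousOn_of_continuous continuous_eval.continuousOn
  obtain ⟨δ, hδ, h⟩ := Metric.uniformContinuousOn_iff_le.mp huc η hη
  refine ⟨δ, hδ, fun x hx u v huv => h (x, u) ⟨hx, trivial⟩ (x, v) ⟨hx, trivial⟩ ?_⟩
  simpa [Prod.dist_eq] using huv

lemma capModulus_le {x : C(unitInterval, ℝ)} {δ' c : ℝ} (hc : 0 ≤ c)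
    (h : ∀ u v : unitInterval, |(u : ℝ) - v| ≤ min δ' 1 → |x u - x v| ≤ c) :
    capModulus x δ' ≤ c :=
  Real.sSup_le (by rintro _ ⟨u, v, huv, rfl⟩; exact h u v huv) hc

lemma capModulus_le_two_mul_norm (x : C(unitInterval, ℝ)) (δ' : ℝ) :
    capModulus x δ' ≤ 2 * ‖x‖ :=
  capModulus_le (by positivity) fun u v _ =>
    calc |x u - x v| ≤ ‖x u‖ + ‖x v‖ := norm_sub_le (x u) (x v)
      _ ≤ 2 * ‖x‖ := by linarith [x.norm_coe_le_norm u, x.norm_coe_le_norm v]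

lemma IsCompact.exists_forall_capModulus_le {K : Set C(unitInterval, ℝ)} (hK : IsCompact K)
    {η : ℝ} (hη : 0 < η) :
    ∃ δ > 0, ∀ x ∈ K, ∀ δ' ≤ δ, capModulus x δ' ≤ η := by
  obtain ⟨δ, hδ, h⟩ := hK.exists_forall_dist_apply_le hη
  refine ⟨δ, hδ, fun x hx δ' hδ' => capModulus_le hη.le fun u v huv => ?_⟩
  exact h x hx u v ((huv.trans (min_le_left _ _)).trans hδ')

lemma IsCompact.exists_forall_capModulus_mul_le_mul_sqrt {K : Set C(unitInterval, ℝ)}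
    (hK : IsCompact K) {γ : ℝ} (hγ : 0 < γ) :
    ∃ δ₀ > 0, ∀ δ ∈ Ioo 0 δ₀, ∀ r ≥ 1, ∀ x ∈ K, capModulus x (r * δ) ≤ γ * √r := by
  obtain ⟨M, hM, hKM⟩ := hK.isBounded.exists_pos_norm_le
  obtain ⟨δ₁, hδ₁, hequi⟩ := hK.exists_forall_capModulus_le hγ
  set B := (2 * M / γ) ^ 2
  refine ⟨δ₁ / (B + 1), by positivity, fun δ hδ r hr x hx => ?_⟩
  rcases le_or_gt B r with hrB | hrB
  · have h2M : 2 * M ≤ γ * √r := by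
      rw [← div_le_iff₀' hγ]
      exact (Real.le_sqrt (by positivity) (by linarith)).mpr hrB
    linarith [capModulus_le_two_mul_norm x (r * δ), hKM x hx]
  · have hrδ : r * δ ≤ δ₁ :=
      calc r * δ ≤ (B + 1) * δ := mul_le_mul_of_nonneg_right (by linarith) hδ.1.le
        _ ≤ δ₁ := by rw [← le_div_iff₀' (by positivity)]; exact hδ.2.le
    calc capModulus x (r * δ) ≤ γ := hequi x hx _ hrδ
      _ ≤ γ * √r := le_mul_of_one_le_right hγ.le (Real.one_le_sqrt.mpr hr)

lemma one_sub_le_measureReal_of_subset {Ω : Type*} [MeasurableSpace Ω] {μ : Measure Ω}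
    [IsProbabilityMeasure μ] {K S : Set Ω} (hKS : K ⊆ S) {ε : ℝ} (hε : 0 ≤ ε)
    (hμK : μ Kᶜ ≤ ENNReal.ofReal ε) : 1 - ε ≤ μ.real S := by
  have hcompl : μ.real Kᶜ ≤ ε := ENNReal.toReal_le_of_le_ofReal hε hμK
  have hunion : 1 ≤ μ.real K + μ.real Kᶜ := by
    simpa [probReal_univ] using measureReal_union_le (μ := μ) K Kᶜ
  linarith [measureReal_mono (μ := μ) hKS]

lemma tendsto_nhds_one_of_le_one {α : Type*} {l : Filter α} {f : α → ℝ} (hle : ∀ a, f a ≤ 1)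
    (h : ∀ ε > 0, ∀ᶠ a in l, 1 - ε ≤ f a) : Tendsto f l (nhds 1) := by
  refine Metric.tendsto_nhds.mpr fun ε hε => ?_
  filter_upwards [h (ε / 2) (by positivity)] with a ha
  rw [Real.dist_eq, abs_of_nonpos (by linarith [hle a])]
  linarith

theorem liminf_final_excursion_general (Qf : ℕ → Measure C(unitInterval, ℝ))
    (hprob : ∀ t, IsProbabilityMeasure (Qf t))
    (htight : IsTightSeq Qf) (γ : ℝ) (hγ : 0 < γ) :
    Filter.liminf (fun δ : ℝ =>
        ⨅ q : {q : ℕ × ℕ // 1 ≤ q.2 ∧ q.2 ≤ q.1},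
          ((Qf q.1.2) {x | capModulus x (((q.1.1 : ℝ) / (q.1.2 : ℝ)) * δ) ≤
            γ * Real.sqrt ((q.1.1 : ℝ) / (q.1.2 : ℝ))}).toReal)
      (nhdsWithin 0 (Set.Ioi 0)) = 1 := by
  refine Tendsto.liminf_eq (tendsto_nhds_one_of_le_one (fun δ => ?_) fun ε hε => ?_)
  · have := hprob 1
    exact ciInf_le_of_le ⟨0, by rintro _ ⟨q, rfl⟩; exact ENNReal.toReal_nonneg⟩
      ⟨(1, 1), le_rfl, le_rfl⟩ measureReal_le_one
  obtain ⟨K, hK, hQK⟩ := htight ε hε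
  obtain ⟨δ₀, hδ₀, hKδ⟩ := hK.exists_forall_capModulus_mul_le_mul_sqrt hγ
  filter_upwards [Ioo_mem_nhdsGT hδ₀] with δ hδ
  have : Nonempty {q : ℕ × ℕ // 1 ≤ q.2 ∧ q.2 ≤ q.1} := ⟨⟨(1, 1), le_rfl, le_rfl⟩⟩
  refine le_ciInf fun ⟨(N, t), ht, htN⟩ => ?_
  have hr : (1 : ℝ) ≤ N / t :=
    (one_le_div (by exact_mod_cast ht)).mpr (by exact_mod_cast htN)
  have := hprob t
  exact one_sub_le_measureReal_of_subset (fun x hx => hKδ δ hδ _ hr x hx) hε.le (hQK t)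

/-- If `(Q_t^f)` is a tight sequence of probability measures on `C([0,1])`
concentrated on paths starting at `0`, then
`g_γ(δ) := inf_{N, 1 ≤ t ≤ N} Q_t^f( Γ((N/t)δ) ≤ γ √(N/t) )` satisfies
`liminf_{δ→0⁺} g_γ(δ) = 1` for every `γ > 0`. -/
theorem liminf_final_excursion (Qf : ℕ → Measure C(unitInterval, ℝ))
    (hprob : ∀ t, IsProbabilityMeasure (Qf t))
    (hzero : ∀ t, Qf t {x | x 0 = 0} = 1)
    (htight : IsTightSeq Qf) (γ : ℝ) (hγ : 0 < γ) :
    Filter.liminf (fun δ : ℝ =>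
        ⨅ q : {q : ℕ × ℕ // 1 ≤ q.2 ∧ q.2 ≤ q.1},
          ((Qf q.1.2) {x | capModulus x (((q.1.1 : ℝ) / (q.1.2 : ℝ)) * δ) ≤
            γ * Real.sqrt ((q.1.1 : ℝ) / (q.1.2 : ℝ))}).toReal)
      (nhdsWithin 0 (Set.Ioi 0)) = 1 :=
  liminf_final_excursion_general Qf hprob htight γ hγ
end

section
/- A sequence of probability measures (Q_N) on C([0,1]), all concentrated on paths with x(0) = 0, is tight if and only if for every γ > 0, lim_{δ→0} sup_N Q_N( Γ̃(δ) > γ ) = 0, where Γ̃(δ) is the excursion-restricted modulus of continuity. -/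
open MeasureTheory Filter Set

variable [MeasurableSpace C(unitInterval, ℝ)] [BorelSpace C(unitInterval, ℝ)]

/-!
The excursion modulus controls the ordinary one: `Γ̃(δ) ≤ Γ(δ) ≤ 2 Γ̃(δ)`. A compact set of paths
is uniformly equicontinuous, so `Γ` (hence `Γ̃`) is uniformly small on it; this gives the forward
direction. Conversely, pick scales `δ k` with `sup_N Q_N (Γ̃(δ k) > 1/(k+1)) < η k`, where
`∑ η k < ε`. By Arzelà–Ascoli the paths with `x 0 = 0` and `Γ(δ k) ≤ 2/(k+1)` for all `k` form a
compact set, and its complement has `Q_N`-measure at most `ε`.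
-/

open Topology

section

omit [MeasurableSpace C(unitInterval, ℝ)] [BorelSpace C(unitInterval, ℝ)]

variable {X α : Type*}

theorem ContinuousMap.isCompact_of_equicontinuous [TopologicalSpace X] [CompactSpace X]
    [PseudoMetricSpace α] {s : Set α} (hs : IsCompact s) {A : Set C(X, α)} (hA : IsClosed A)
    (hAs : ∀ f ∈ A, ∀ x, f x ∈ s) (hA_equi : Equicontinuous ((↑) : A → X → α)) :
    IsCompact A := by
  let e := (ContinuousMap.isometryEquivBoundedOfCompact X α).toHomeomorph
  refine e.isCompact_image.1 <| BoundedContinuousFunction.arzela_ascoli₂ s hs _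
    (e.isClosed_image.2 hA) (by rintro _ x ⟨f, hf, rfl⟩; exact hAs f hf x) ?_
  have he : ∀ g ∈ e '' A, e.symm g ∈ A := by
    rintro _ ⟨f, hf, rfl⟩
    rwa [e.symm_apply_apply]
  exact hA_equi.comp fun g : e '' A => ⟨e.symm g, he _ g.property⟩

theorem IsCompact.uniformEquicontinuous_coe [PseudoMetricSpace X] [CompactSpace X]
    [PseudoMetricSpace α] {K : Set C(X, α)} (hK : IsCompact K) :
    UniformEquicontinuous ((↑) : K → X → α) := by
  have : CompactSpace K := isCompact_iff_compactSpace.mp hK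
  have hK_eval : UniformContinuous fun p : K × X => (p.1 : C(X, α)) p.2 :=
    CompactSpace.uniformContinuous_of_continuous <|
      continuous_eval.comp (continuous_subtype_val.prodMap continuous_id)
  rw [Metric.uniformEquicontinuous_iff]
  intro ε hε
  obtain ⟨δ, hδ, h⟩ := Metric.uniformContinuous_iff.1 hK_eval ε hε
  exact ⟨δ, hδ, fun s t hst f => h (a := (f, s)) (b := (f, t)) (by simpa [Prod.dist_eq] using hst)⟩

theorem unitInterval.abs_sub_apply_zero_le {f : unitInterval → ℝ} {δ c : ℝ} (hδ : 0 < δ)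
    (hf : ∀ s t : unitInterval, |(t : ℝ) - s| ≤ δ → |f t - f s| ≤ c) (n : ℕ) (t : unitInterval)
    (ht : (t : ℝ) ≤ n * δ) : |f t - f 0| ≤ n * c := by
  induction n generalizing t with
  | zero =>
    obtain rfl : t = 0 := Subtype.ext (le_antisymm (by simpa using ht) t.2.1)
    simp
  | succ n ih =>
    let s : unitInterval := Set.projIcc 0 1 zero_le_one ((t : ℝ) - δ)
    have hs : (s : ℝ) = max 0 ((t : ℝ) - δ) := by
      simp only [s, Set.coe_projIcc, min_eq_right (by linarith [t.2.2] : (t : ℝ) - δ ≤ 1)]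
    have hts : |(t : ℝ) - s| ≤ δ := by
      rw [hs, abs_le]
      constructor <;> cases max_cases (0 : ℝ) ((t : ℝ) - δ) <;> linarith [t.2.1]
    have hsn : (s : ℝ) ≤ n * δ := by
      rw [hs]; push_cast at ht; exact max_le (by positivity) (by linarith)
    calc |f t - f 0| ≤ |f t - f s| + |f s - f 0| := abs_sub_le _ _ _
      _ ≤ c + n * c := add_le_add (hf s t hts) (ih s hsn)
      _ = (n + 1 : ℕ) * c := by push_cast; ring

variable {x : C(unitInterval, ℝ)} {δ : ℝ} {s t : unitInterval}

theorem sameExcursion_self (x : C(unitInterval, ℝ)) (s : unitInterval) : sameExcursion x s s :=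
  fun _ h₁ h₂ => absurd (h₁.trans h₂) (by simp)

theorem sameExcursion_of_le (hst : s ≤ t) (hx : ∀ u, s < u → u < t → x u ≠ 0) :
    sameExcursion x s t := by
  intro u hsu hut
  rw [min_eq_left (Subtype.coe_le_coe.2 hst)] at hsu
  rw [max_eq_right (Subtype.coe_le_coe.2 hst)] at hut
  exact hx u hsu hut

theorem le_excModulus (hst : |(t : ℝ) - s| ≤ δ) (hx : sameExcursion x s t) :
    |x t - x s| ≤ excModulus x δ := by
  refine le_csSup ⟨2 * ‖x‖, ?_⟩ ⟨s, t, hst, hx, rfl⟩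
  rintro _ ⟨s', t', -, -, rfl⟩
  calc |x t' - x s'| ≤ |x t'| + |x s'| := abs_sub _ _
    _ ≤ ‖x‖ + ‖x‖ := add_le_add (x.norm_coe_le_norm t') (x.norm_coe_le_norm s')
    _ = 2 * ‖x‖ := (two_mul _).symm

theorem excModulus_nonneg (x : C(unitInterval, ℝ)) (hδ : 0 ≤ δ) : 0 ≤ excModulus x δ := by
  simpa using le_excModulus (x := x) (s := 0) (t := 0) (by simpa using hδ) (sameExcursion_self x 0)

theorem excModulus_le {c : ℝ} (hc : 0 ≤ c)
    (hx : ∀ s t : unitInterval, |(t : ℝ) - s| ≤ δ → |x t - x s| ≤ c) : excModulus x δ ≤ c := by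
  refine Real.sSup_le ?_ hc
  rintro _ ⟨s, t, hst, -, rfl⟩
  exact hx s t hst

/-- Between `s` and `t`, cut at the first and the last zero of `x`: the two outer pieces lie
in single excursions and end at a zero, so `|x s|` and `|x t|` are each at most `Γ̃(δ)`. -/
theorem abs_sub_le_two_mul_excModulus (hst : |(t : ℝ) - s| ≤ δ) :
    |x t - x s| ≤ 2 * excModulus x δ := by
  wlog hle : s ≤ t generalizing s t
  · rw [abs_sub_comm]
    exact this (by rwa [abs_sub_comm]) (le_of_not_ge hle)
  have hδ : 0 ≤ δ := (abs_nonneg _).trans hst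
  have hsub : ∀ a b : unitInterval, s ≤ a → a ≤ b → b ≤ t → |(b : ℝ) - a| ≤ δ := by
    intro a b hsa hab hbt
    refine le_trans ?_ hst
    rw [abs_of_nonneg (sub_nonneg.2 (Subtype.coe_le_coe.2 hab)),
      abs_of_nonneg (sub_nonneg.2 (Subtype.coe_le_coe.2 hle))]
    have := Subtype.coe_le_coe.2 hsa; have := Subtype.coe_le_coe.2 hbt
    linarith
  set Z := {u : unitInterval | u ∈ Icc s t ∧ x u = 0}
  rcases Z.eq_empty_or_nonempty with hZ | hZ
  · have hx : sameExcursion x s t := sameExcursion_of_le hle fun u hsu hut hxu =>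
      hZ.subset ⟨⟨hsu.le, hut.le⟩, hxu⟩
    linarith [le_excModulus hst hx, excModulus_nonneg x hδ]
  have hZ_compact : IsCompact Z :=
    (isClosed_Icc.inter (isClosed_eq x.continuous continuous_const)).isCompact
  obtain ⟨u, ⟨hu, hxu⟩, hu_least⟩ := hZ_compact.exists_isLeast hZ
  obtain ⟨v, ⟨hv, hxv⟩, hv_greatest⟩ := hZ_compact.exists_isGreatest hZ
  have hs : |x s| ≤ excModulus x δ := by
    have hsu : sameExcursion x s u := sameExcursion_of_le hu.1 fun w hsw hwu hxw =>
      (hu_least ⟨⟨hsw.le, hwu.le.trans hu.2⟩, hxw⟩).not_gt hwu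
    simpa [hxu] using le_excModulus (hsub s u le_rfl hu.1 hu.2) hsu
  have ht : |x t| ≤ excModulus x δ := by
    have hvt : sameExcursion x v t := sameExcursion_of_le hv.2 fun w hvw hwt hxw =>
      (hv_greatest ⟨⟨hv.1.trans hvw.le, hwt.le⟩, hxw⟩).not_gt hvw
    simpa [hxv] using le_excModulus (hsub v t hv.1 hv.2 le_rfl) hvt
  calc |x t - x s| ≤ |x t| + |x s| := abs_sub _ _
    _ ≤ 2 * excModulus x δ := by linarith

def pathsWithModulus (δ ω : ℕ → ℝ) : Set C(unitInterval, ℝ) :=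
  {x | x 0 = 0 ∧ ∀ k, ∀ s t : unitInterval, |(t : ℝ) - s| ≤ δ k → |x t - x s| ≤ ω k}

theorem isCompact_pathsWithModulus {δ ω : ℕ → ℝ} (hδ : ∀ k, 0 < δ k)
    (hω : Tendsto ω atTop (𝓝 0)) : IsCompact (pathsWithModulus δ ω) := by
  obtain ⟨n, hn⟩ := exists_nat_ge (1 / δ 0)
  have hn : 1 ≤ n * δ 0 := by rwa [div_le_iff₀ (hδ 0)] at hn
  refine ContinuousMap.isCompact_of_equicontinuous (isCompact_Icc (a := -(n * ω 0)) (b := n * ω 0))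
    ?_ ?_ ?_
  · have : pathsWithModulus δ ω = {x | x 0 = 0} ∩ ⋂ (k) (s : unitInterval) (t : unitInterval)
        (_ : |(t : ℝ) - s| ≤ δ k), {x | |x t - x s| ≤ ω k} := by
      ext x; simp only [pathsWithModulus, mem_inter_iff, mem_iInter]; rfl
    rw [this]
    exact (isClosed_eq (continuous_eval_const 0) continuous_const).inter <|
      isClosed_iInter fun k => isClosed_iInter fun s => isClosed_iInter fun t =>
        isClosed_iInter fun _ => isClosed_le (by fun_prop) continuous_const
  · intro x hx t
    have := unitInterval.abs_sub_apply_zero_le (hδ 0) (hx.2 0) n t (by linarith [t.2.2])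
    rw [hx.1, sub_zero] at this
    exact abs_le.1 this
  · refine (Metric.uniformEquicontinuous_iff.2 fun ε hε => ?_).equicontinuous
    obtain ⟨k, hk⟩ := (hω.eventually (gt_mem_nhds hε)).exists
    refine ⟨δ k, hδ k, fun s t hst x => ?_⟩
    rw [Subtype.dist_eq, Real.dist_eq] at hst
    rw [Real.dist_eq]
    exact (x.2.2 k t s hst.le).trans_lt hk

theorem compl_pathsWithModulus_subset (δ γ : ℕ → ℝ) :
    (pathsWithModulus δ fun k => 2 * γ k)ᶜ ⊆
      {x | x 0 = 0}ᶜ ∪ ⋃ k, {x | γ k < excModulus x (δ k)} := by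
  intro x hx
  by_cases h0 : x 0 = 0
  · refine Or.inr (mem_iUnion.2 ?_)
    by_contra! hle
    exact hx ⟨h0, fun k s t hst => (abs_sub_le_two_mul_excModulus hst).trans
      (mul_le_mul_of_nonneg_left (le_of_not_gt (hle k)) zero_le_two)⟩
  · exact Or.inl h0

theorem exists_pos_forall_measure_lt_of_tendsto {Ω : Type*} [MeasurableSpace Ω]
    {Q : ℕ → Measure Ω} [∀ N, IsProbabilityMeasure (Q N)] {E : ℝ → Set Ω}
    (hE : Tendsto (fun δ => ⨆ N, (Q N (E δ)).toReal) (𝓝[>] 0) (𝓝 0)) {η : NNReal} (hη : 0 < η) :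
    ∃ δ > 0, ∀ N, Q N (E δ) < η := by
  obtain ⟨δ, hδ_small, hδ_pos⟩ :=
    ((hE.eventually (gt_mem_nhds (NNReal.coe_pos.2 hη))).and self_mem_nhdsWithin).exists
  refine ⟨δ, hδ_pos, fun N => ?_⟩
  have hbdd : BddAbove (range fun N => (Q N (E δ)).toReal) := by
    refine ⟨1, ?_⟩
    rintro _ ⟨M, rfl⟩
    exact ENNReal.toReal_le_of_le_ofReal zero_le_one (by simpa using prob_le_one)
  rw [← ENNReal.ofReal_coe_nnreal]
  exact (ENNReal.lt_ofReal_iff_toReal_lt (measure_ne_top _ _)).2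
    ((le_ciSup hbdd N).trans_lt hδ_small)

end

omit [BorelSpace C(unitInterval, ℝ)] in
theorem tendsto_excModulus_of_isTightSeq {Q : ℕ → Measure C(unitInterval, ℝ)}
    (hQ : IsTightSeq Q) {γ : ℝ} (hγ : 0 < γ) :
    Tendsto (fun δ : ℝ => ⨆ N, (Q N {x | γ < excModulus x δ}).toReal) (𝓝[>] 0) (𝓝 0) := by
  refine tendsto_order.2 ⟨fun a ha => .of_forall fun δ =>
    ha.trans_le (Real.iSup_nonneg fun N => ENNReal.toReal_nonneg), fun ε hε => ?_⟩
  obtain ⟨K, hK, hQK⟩ := hQ (ε / 2) (half_pos hε)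
  obtain ⟨d, hd, hK_equi⟩ := Metric.uniformEquicontinuous_iff.1 hK.uniformEquicontinuous_coe γ hγ
  filter_upwards [Ioo_mem_nhdsGT hd] with δ hδ
  refine (ciSup_le fun N => ?_).trans_lt (half_lt_self hε)
  have hsub : {x | γ < excModulus x δ} ⊆ Kᶜ := fun x hx hxK =>
    hx.not_ge <| excModulus_le hγ.le fun s t hst => by
      have := hK_equi t s (by rw [Subtype.dist_eq, Real.dist_eq]; linarith [hδ.2]) ⟨x, hxK⟩
      exact (Real.dist_eq _ _ ▸ this).le
  exact ENNReal.toReal_le_of_le_ofReal (half_pos hε).le ((measure_mono hsub).trans (hQK N))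

theorem isTightSeq_of_tendsto_excModulus {Q : ℕ → Measure C(unitInterval, ℝ)}
    [∀ N, IsProbabilityMeasure (Q N)] (hzero : ∀ N, Q N {x | x 0 = 0} = 1)
    (h : ∀ γ : ℝ, 0 < γ →
      Tendsto (fun δ : ℝ => ⨆ N, (Q N {x | γ < excModulus x δ}).toReal) (𝓝[>] 0) (𝓝 0)) :
    IsTightSeq Q := by
  intro ε hε
  obtain ⟨η, hη, hη_sum⟩ := ENNReal.exists_pos_sum_of_countable (ENNReal.ofReal_pos.2 hε).ne' ℕ
  choose δ hδ hQδ using fun k : ℕ =>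
    exists_pos_forall_measure_lt_of_tendsto (h _ Nat.one_div_pos_of_nat) (hη k)
  have hω : Tendsto (fun k : ℕ => 2 * (1 / ((k : ℝ) + 1))) atTop (𝓝 0) := by
    simpa using tendsto_one_div_add_atTop_nhds_zero_nat.const_mul (2 : ℝ)
  refine ⟨_, isCompact_pathsWithModulus hδ hω, fun N => ?_⟩
  have hQ0 : Q N {x | x 0 = 0}ᶜ = 0 :=
    (prob_compl_eq_zero_iff (isClosed_eq (continuous_eval_const 0) continuous_const).measurableSet).2
      (hzero N)
  calc Q N (pathsWithModulus δ _)ᶜ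
      ≤ Q N ({x | x 0 = 0}ᶜ ∪ ⋃ k : ℕ, {x | 1 / ((k : ℝ) + 1) < excModulus x (δ k)}) :=
        measure_mono (compl_pathsWithModulus_subset _ _)
    _ ≤ Q N {x | x 0 = 0}ᶜ + ∑' k : ℕ, Q N {x | 1 / ((k : ℝ) + 1) < excModulus x (δ k)} :=
        (measure_union_le _ _).trans (add_le_add_right (measure_iUnion_le _) _)
    _ ≤ ∑' k, (η k : ENNReal) := by
        rw [hQ0, zero_add]
        exact ENNReal.tsum_le_tsum fun k => (hQδ k N).le
    _ ≤ ENNReal.ofReal ε := hη_sum.le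

/-- A sequence `(Q_N)` of probability measures on `C([0,1])`, all concentrated
on paths with `x 0 = 0`, is tight iff for every `γ > 0`,
`lim_{δ→0⁺} sup_N Q_N( Γ̃(δ) > γ ) = 0`, where `Γ̃` is the excursion-restricted
modulus of continuity. -/
theorem tight_iff_excModulus (Q : ℕ → Measure C(unitInterval, ℝ))
    (hprob : ∀ N, IsProbabilityMeasure (Q N))
    (hzero : ∀ N, Q N {x | x 0 = 0} = 1) :
    IsTightSeq Q ↔ ∀ γ : ℝ, 0 < γ →
      Tendsto (fun δ : ℝ => ⨆ N, (Q N {x | γ < excModulus x δ}).toReal)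
        (nhdsWithin 0 (Set.Ioi 0)) (nhds 0) :=
  ⟨fun hQ _ hγ => tendsto_excModulus_of_isTightSeq hQ hγ, isTightSeq_of_tendsto_excModulus hzero⟩
end
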